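/- arXiv:2602.11458 — 2 statements merged into one kernel-verified Lean document; each statement's English description precedes it below -/
import Mathlib

section
/- Fix $0<\theta\leq 1$ and positive integers $L\geq 2$ and $N\geq m$, where $m=\lceil\theta L\rceil$. With $r(t)=\lceil\theta t\rceil$ and $I=\{1\leq t\leq L: r(t)=r(t-1)+1\}$, one has $\prod_{t\in\{1,\ldots,L\}\setminus I} r(t-1)\geq \theta^{L-1} m^{L-m}$, and consequently $\log\#\mathcal{B}\geq m\log N - m + (L-m)\log m + (L-1)\log\theta$, where $\mathcal{B}$ is the set of words $(d_1,\ldots,d_L)$ over an alphabet of size $N$ whose prefix distinctness equals $r(t)$ for every $t$. -/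
/-!
Write `r t = ⌈θ t⌉₊`. Since `0 < θ ≤ 1`, `r 0 = 0`, `r 1 = 1`, and `r` grows by `0` or `1` at
each step. A word with prefix profile `r` extends by one letter in `N - r t` ways (a fresh
letter) when `r` jumps and in `r t` ways (a repeated letter) when it stays flat, so
`#B = N (N - 1) ⋯ (N - m + 1) · ∏_{flat t} r (t - 1)`.
On the jumps in `[2, L]` the values `r (t - 1)` run through `1, …, m - 1`, while
`r (t - 1) ≥ θ (t - 1)` for all `t`; hence the flat product is at least
`θ^(L-1) (L-1)! / (m-1)! ≥ θ^(L-1) m^(L-m)`.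
Finally `N (N - 1) ⋯ (N - m + 1) ≥ (N / m)^m m! ≥ (N / e)^m`.
-/

open Finset
open scoped Nat

section UnitStep

variable {r : ℕ → ℕ}

lemma one_le_and_le_self_of_unit_steps (hr1 : r 1 = 1)
    (hr : ∀ t, r (t + 1) = r t ∨ r (t + 1) = r t + 1) {L : ℕ} (hL : 1 ≤ L) : 1 ≤ r L ∧ r L ≤ L := by
  induction L, hL using Nat.le_induction with
  | base => simp [hr1]
  | succ L _ ih => rcases hr L with h | h <;> omega

lemma prod_filter_jump_eq_factorial (hr1 : r 1 = 1)
    (hr : ∀ t, r (t + 1) = r t ∨ r (t + 1) = r t + 1) {L : ℕ} (hL : 1 ≤ L) :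
    ∏ t ∈ (Icc 2 L).filter (fun t => r t = r (t - 1) + 1), r (t - 1) = (r L - 1)! := by
  induction L, hL using Nat.le_induction with
  | base => simp [hr1]
  | succ L hL ih =>
    have hrL := (one_le_and_le_self_of_unit_steps hr1 hr hL).1
    rw [prod_filter, prod_Icc_succ_top (by omega), ← prod_filter, ih, Nat.add_sub_cancel]
    rcases hr L with h | h
    · rw [if_neg (by omega), h, mul_one]
    · rw [if_pos h, h, Nat.add_sub_cancel, mul_comm, Nat.mul_factorial_pred (by omega)]

lemma pow_mul_factorial_le_prod_Icc {θ : ℝ} (hθ : 0 ≤ θ) (hθr : ∀ t : ℕ, θ * t ≤ r t) {L : ℕ}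
    (hL : 1 ≤ L) : θ ^ (L - 1) * ((L - 1)! : ℝ) ≤ ∏ t ∈ Icc 2 L, (r (t - 1) : ℝ) := by
  induction L, hL using Nat.le_induction with
  | base => simp
  | succ L hL ih =>
    rw [prod_Icc_succ_top (by omega), Nat.add_sub_cancel]
    obtain ⟨k, rfl⟩ : ∃ k, L = k + 1 := ⟨L - 1, by omega⟩
    calc θ ^ (k + 1) * ((k + 1)! : ℝ) = θ ^ k * (k ! : ℝ) * (θ * (k + 1 : ℕ)) := by
          push_cast [Nat.factorial_succ]; ring
      _ ≤ (∏ t ∈ Icc 2 (k + 1), (r (t - 1) : ℝ)) * r (k + 1) := by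
          gcongr
          · simpa using ih
          · exact hθr _

lemma pow_mul_pow_le_prod_filter_flat (hr0 : r 0 = 0) (hr1 : r 1 = 1)
    (hr : ∀ t, r (t + 1) = r t ∨ r (t + 1) = r t + 1) {θ : ℝ} (hθ : 0 ≤ θ)
    (hθr : ∀ t : ℕ, θ * t ≤ r t) {L : ℕ} (hL : 1 ≤ L) :
    θ ^ (L - 1) * (r L : ℝ) ^ (L - r L) ≤
      ∏ t ∈ (Icc 1 L).filter (fun t => ¬ r t = r (t - 1) + 1), (r (t - 1) : ℝ) := by
  obtain ⟨hm1, hmL⟩ := one_le_and_le_self_of_unit_steps hr1 hr hL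
  have hIcc : (Icc 1 L).filter (fun t => ¬ r t = r (t - 1) + 1)
      = (Icc 2 L).filter (fun t => ¬ r t = r (t - 1) + 1) := by
    ext t
    simp only [mem_filter, mem_Icc]
    refine ⟨fun ⟨⟨h1, hL⟩, hflat⟩ => ⟨⟨?_, hL⟩, hflat⟩,
      fun ⟨⟨h2, hL⟩, hflat⟩ => ⟨⟨by omega, hL⟩, hflat⟩⟩
    rcases h1.eq_or_lt with rfl | h1
    · simp [hr0, hr1] at hflat
    · exact h1
  have hfact : ((r L - 1)! : ℝ) * (r L : ℝ) ^ (L - r L) ≤ ((L - 1)! : ℝ) := by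
    have := Nat.factorial_mul_pow_le_factorial (m := r L - 1) (n := L - r L)
    rw [Nat.sub_add_cancel hm1, show r L - 1 + (L - r L) = L - 1 by omega] at this
    exact_mod_cast this
  rw [hIcc]
  refine le_of_mul_le_mul_left ?_ (by positivity : (0 : ℝ) < (r L - 1)!)
  calc ((r L - 1)! : ℝ) * (θ ^ (L - 1) * (r L : ℝ) ^ (L - r L))
      = θ ^ (L - 1) * (((r L - 1)! : ℝ) * (r L : ℝ) ^ (L - r L)) := by ring
    _ ≤ θ ^ (L - 1) * ((L - 1)! : ℝ) := by gcongr
    _ ≤ ∏ t ∈ Icc 2 L, (r (t - 1) : ℝ) := pow_mul_factorial_le_prod_Icc hθ hθr hL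
    _ = _ := by
      rw [← prod_filter_mul_prod_filter_not (Icc 2 L) (fun t => r t = r (t - 1) + 1)]
      push_cast [← prod_filter_jump_eq_factorial hr1 hr hL]
      rfl

end UnitStep

section Words

variable {α : Type*} [DecidableEq α] {L : ℕ}

def prefixImage (d : Fin L → α) (t : ℕ) : Finset α :=
  (univ.filter fun i : Fin L => (i : ℕ) < t).image d

def HasProfile (r : ℕ → ℕ) (d : Fin L → α) : Prop :=
  ∀ t, 1 ≤ t → t ≤ L → (prefixImage d t).card = r t

lemma hasProfile_comp_iff {β : Type*} [DecidableEq β] {r : ℕ → ℕ} {f : α → β}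
    (hf : Function.Injective f) {d : Fin L → α} : HasProfile r (f ∘ d) ↔ HasProfile r d := by
  simp only [HasProfile, prefixImage, ← image_image, card_image_of_injective _ hf]

lemma natCard_hasProfile_comp {β : Type*} [DecidableEq β] {r : ℕ → ℕ} {f : α → β}
    (hf : Function.Injective f) :
    Nat.card {d : Fin L → α // HasProfile r (f ∘ d)} =
      Nat.card {d : Fin L → α // HasProfile r d} :=
  Nat.card_congr (Equiv.subtypeEquivRight fun _ => hasProfile_comp_iff hf)

lemma prefixImage_init (d : Fin (L + 1) → α) {t : ℕ} (ht : t ≤ L) :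
    prefixImage (Fin.init d) t = prefixImage d t := by
  ext a
  simp only [prefixImage, mem_image, mem_filter, mem_univ, true_and, Fin.init]
  constructor
  · rintro ⟨i, hi, rfl⟩
    exact ⟨i.castSucc, hi, rfl⟩
  · rintro ⟨i, hi, rfl⟩
    exact ⟨⟨i, by omega⟩, hi, rfl⟩

lemma prefixImage_last (d : Fin (L + 1) → α) :
    prefixImage d (L + 1) = insert (d (Fin.last L)) (prefixImage (Fin.init d) L) := by
  ext a
  simp only [prefixImage, mem_image, mem_filter, mem_univ, true_and, Fin.init, mem_insert]
  constructor
  · rintro ⟨i, -, rfl⟩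
    rcases Fin.eq_castSucc_or_eq_last i with ⟨j, rfl⟩ | rfl
    · exact Or.inr ⟨j, j.isLt, rfl⟩
    · exact Or.inl rfl
  · rintro (rfl | ⟨i, -, rfl⟩)
    · exact ⟨Fin.last L, by simp, rfl⟩
    · exact ⟨i.castSucc, by simp, rfl⟩

lemma HasProfile.card_prefixImage_self {r : ℕ → ℕ} (hr0 : r 0 = 0) {d : Fin L → α}
    (hd : HasProfile r d) : (prefixImage d L).card = r L := by
  rcases Nat.eq_zero_or_pos L with rfl | hL
  · simp [prefixImage, hr0]
  · exact hd L hL le_rfl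

lemma hasProfile_succ_iff {r : ℕ → ℕ} {d : Fin (L + 1) → α} :
    HasProfile r d ↔ HasProfile r (Fin.init d) ∧
      (insert (d (Fin.last L)) (prefixImage (Fin.init d) L)).card = r (L + 1) := by
  rw [← prefixImage_last]
  constructor
  · intro h
    exact ⟨fun t h1 ht => prefixImage_init d ht ▸ h t h1 (by omega),
      h (L + 1) (by omega) le_rfl⟩
  · rintro ⟨h, hlast⟩ t h1 ht
    rcases ht.eq_or_lt with rfl | ht
    · exact hlast
    · exact prefixImage_init d (by omega : t ≤ L) ▸ h t h1 (by omega)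

def hasProfileSuccEquiv (r : ℕ → ℕ) :
    {d : Fin (L + 1) → α // HasProfile r d} ≃
      Σ d : {d : Fin L → α // HasProfile r d},
        {a : α // (insert a (prefixImage d.1 L)).card = r (L + 1)} where
  toFun d := ⟨⟨Fin.init d.1, (hasProfile_succ_iff.1 d.2).1⟩,
    ⟨d.1 (Fin.last L), (hasProfile_succ_iff.1 d.2).2⟩⟩
  invFun p := ⟨Fin.snoc p.1.1 p.2.1,
    hasProfile_succ_iff.2 ⟨by simpa using p.1.2, by simpa using p.2.2⟩⟩
  left_inv d := Subtype.ext (Fin.snoc_init_self d.1)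
  right_inv p := Sigma.subtype_ext (Subtype.ext (by simp)) (by simp)

variable [Fintype α]

lemma natCard_card_insert_eq (S : Finset α) {k : ℕ} (hk : k = S.card ∨ k = S.card + 1) :
    Nat.card {a : α // (insert a S).card = k} =
      if k = S.card + 1 then Fintype.card α - S.card else S.card := by
  rcases hk with rfl | rfl
  · rw [if_neg (by omega), ← Nat.card_eq_finsetCard S]
    refine Nat.card_congr (Equiv.subtypeEquivRight fun a => ?_)
    by_cases ha : a ∈ S <;> simp [ha, card_insert_of_notMem]
  · rw [if_pos rfl, ← card_compl, ← Nat.card_eq_finsetCard Sᶜ]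
    refine Nat.card_congr (Equiv.subtypeEquivRight fun a => ?_)
    by_cases ha : a ∈ S <;> simp [ha, card_insert_of_notMem]

lemma natCard_hasProfile_succ {r : ℕ → ℕ} (hr0 : r 0 = 0)
    (hr : ∀ t, r (t + 1) = r t ∨ r (t + 1) = r t + 1) :
    Nat.card {d : Fin (L + 1) → α // HasProfile r d} =
      Nat.card {d : Fin L → α // HasProfile r d} *
        if r (L + 1) = r L + 1 then Fintype.card α - r L else r L := by
  classical
  rw [Nat.card_congr (hasProfileSuccEquiv r), Nat.card_sigma, Nat.card_eq_fintype_card,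
    ← smul_eq_mul, ← Finset.card_univ, ← sum_const]
  refine sum_congr rfl fun d _ => ?_
  rw [natCard_card_insert_eq _ ((d.2.card_prefixImage_self hr0).symm ▸ hr L),
    d.2.card_prefixImage_self hr0]

theorem natCard_hasProfile {r : ℕ → ℕ} (hr0 : r 0 = 0)
    (hr : ∀ t, r (t + 1) = r t ∨ r (t + 1) = r t + 1) (L : ℕ) :
    Nat.card {d : Fin L → α // HasProfile r d} = (Fintype.card α).descFactorial (r L) *
      ∏ t ∈ (Icc 1 L).filter (fun t => ¬ r t = r (t - 1) + 1), r (t - 1) := by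
  induction L with
  | zero =>
    rw [Nat.card_congr (Equiv.subtypeUnivEquiv (p := HasProfile (α := α) r)
      fun _ t h1 h0 => by omega)]
    simp [hr0]
  | succ L ih =>
    rw [natCard_hasProfile_succ hr0 hr, ih, prod_filter, prod_filter,
      prod_Icc_succ_top (by omega), Nat.add_sub_cancel]
    rcases hr L with h | h
    · rw [if_neg (by omega), if_pos (by omega), h]
      ring
    · rw [if_pos h, if_neg (by omega), h, Nat.descFactorial_succ]
      ring

end Words

lemma Nat.pow_mul_factorial_le_pow_mul_descFactorial {m N : ℕ} (h : m ≤ N) :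
    N ^ m * m ! ≤ m ^ m * N.descFactorial m := by
  calc N ^ m * m ! = ∏ i ∈ range m, N * (m - i) := by
        rw [prod_mul_distrib, prod_const, card_range, ← Nat.descFactorial_eq_prod_range,
          Nat.descFactorial_self]
    _ ≤ ∏ i ∈ range m, m * (N - i) := prod_le_prod' fun i hi => by
        rw [Nat.mul_sub, Nat.mul_sub, mul_comm N m]
        exact Nat.sub_le_sub_left (Nat.mul_le_mul_right i h) _
    _ = m ^ m * N.descFactorial m := by
        rw [prod_mul_distrib, prod_const, card_range, Nat.descFactorial_eq_prod_range]

lemma Nat.pow_le_exp_mul_descFactorial {m N : ℕ} (h : m ≤ N) :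
    (N : ℝ) ^ m ≤ Real.exp m * N.descFactorial m := by
  have hfact : (m : ℝ) ^ m ≤ Real.exp m * m ! := by
    have := Real.pow_div_factorial_le_exp _ (Nat.cast_nonneg m) m
    rwa [div_le_iff₀ (by positivity)] at this
  refine le_of_mul_le_mul_right ?_ (by positivity : (0 : ℝ) < m !)
  calc (N : ℝ) ^ m * m ! ≤ (m : ℝ) ^ m * N.descFactorial m := by
        exact_mod_cast Nat.pow_mul_factorial_le_pow_mul_descFactorial h
    _ ≤ Real.exp m * m ! * N.descFactorial m := by gcongr
    _ = Real.exp m * N.descFactorial m * m ! := by ring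

lemma Nat.mul_log_sub_le_log_descFactorial {m N : ℕ} (h : m ≤ N) :
    m * Real.log N - m ≤ Real.log (N.descFactorial m) := by
  rcases Nat.eq_zero_or_pos m with rfl | hm
  · simp
  have hpos : (0 : ℝ) < N.descFactorial m := by exact_mod_cast Nat.descFactorial_pos.2 h
  have hN : (0 : ℝ) < N := by exact_mod_cast hm.trans_le h
  have := Real.log_le_log (by positivity) (Nat.pow_le_exp_mul_descFactorial h)
  rw [Real.log_pow, Real.log_mul (by positivity) hpos.ne', Real.log_exp] at this
  linarith

lemma Nat.ceil_mul_succ_eq_or {θ : ℝ} (hθ0 : 0 ≤ θ) (hθ1 : θ ≤ 1) (t : ℕ) :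
    ⌈θ * ((t + 1 : ℕ) : ℝ)⌉₊ = ⌈θ * t⌉₊ ∨ ⌈θ * ((t + 1 : ℕ) : ℝ)⌉₊ = ⌈θ * t⌉₊ + 1 := by
  have hmono : ⌈θ * t⌉₊ ≤ ⌈θ * ((t + 1 : ℕ) : ℝ)⌉₊ := Nat.ceil_mono (by gcongr; simp)
  have hstep : ⌈θ * ((t + 1 : ℕ) : ℝ)⌉₊ ≤ ⌈θ * t⌉₊ + 1 := by
    rw [← Nat.ceil_add_one (by positivity)]
    exact Nat.ceil_mono (by push_cast; nlinarith)
  omega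

/-- Lower bounds for the block count: the repeat-time product is at least `θ^{L-1} m^{L-m}`,
and consequently `log #B ≥ m log N - m + (L-m) log m + (L-1) log θ`. -/
theorem stmt6 (θ : ℝ) (hθ0 : 0 < θ) (hθ1 : θ ≤ 1) (Lb N : ℕ) (hLb : 2 ≤ Lb)
    (hNm : ⌈θ * (Lb : ℝ)⌉₊ ≤ N) :
    θ ^ (Lb - 1) * ((⌈θ * (Lb : ℝ)⌉₊ : ℝ)) ^ (Lb - ⌈θ * (Lb : ℝ)⌉₊) ≤
      (∏ t ∈ (Finset.Icc 1 Lb).filter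
          (fun t : ℕ => ¬ (⌈θ * (t : ℝ)⌉₊ = ⌈θ * ((t - 1 : ℕ) : ℝ)⌉₊ + 1)),
        (⌈θ * ((t - 1 : ℕ) : ℝ)⌉₊ : ℝ)) ∧
    ∀ A : Finset ℕ, A.card = N →
      (⌈θ * (Lb : ℝ)⌉₊ : ℝ) * Real.log N - (⌈θ * (Lb : ℝ)⌉₊ : ℝ)
          + ((Lb : ℝ) - (⌈θ * (Lb : ℝ)⌉₊ : ℝ)) * Real.log (⌈θ * (Lb : ℝ)⌉₊ : ℝ)
          + ((Lb : ℝ) - 1) * Real.log θ ≤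
        Real.log (Nat.card {d : Fin Lb → A //
          ∀ t : ℕ, 1 ≤ t → t ≤ Lb →
            ((Finset.univ.filter (fun i : Fin Lb => (i : ℕ) < t)).image
              (fun i => ((d i : ℕ)))).card = ⌈θ * (t : ℝ)⌉₊}) := by
  set r : ℕ → ℕ := fun t => ⌈θ * (t : ℝ)⌉₊
  have hr0 : r 0 = 0 := by simp [r]
  have hr1 : r 1 = 1 := by simpa [r] using (Nat.ceil_eq_iff one_ne_zero).2 ⟨by simpa, by simpa⟩
  have hr : ∀ t, r (t + 1) = r t ∨ r (t + 1) = r t + 1 := Nat.ceil_mul_succ_eq_or hθ0.le hθ1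
  have hflat := pow_mul_pow_le_prod_filter_flat hr0 hr1 hr hθ0.le
    (fun t => Nat.le_ceil (θ * t)) (by omega : 1 ≤ Lb)
  refine ⟨hflat, fun A hA => ?_⟩
  have hmL := (one_le_and_le_self_of_unit_steps hr1 hr (by omega : 1 ≤ Lb)).2
  change _ ≤ Real.log (Nat.card {d : Fin Lb → A // HasProfile r (Subtype.val ∘ d)})
  rw [natCard_hasProfile_comp Subtype.val_injective, natCard_hasProfile hr0 hr,
    Fintype.card_coe, hA]
  have hpos : 0 < θ ^ (Lb - 1) * (r Lb : ℝ) ^ (Lb - r Lb) := by positivity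
  have hlog_flat := Real.log_le_log hpos hflat
  rw [Real.log_mul (by positivity) (by positivity), Real.log_pow, Real.log_pow,
    Nat.cast_sub hmL, Nat.cast_sub (by omega : 1 ≤ Lb), Nat.cast_one] at hlog_flat
  have hdesc := Nat.mul_log_sub_le_log_descFactorial hNm
  push_cast
  rw [Real.log_mul (Nat.cast_pos.2 (Nat.descFactorial_pos.2 hNm)).ne'
    (hpos.trans_le hflat).ne']
  linarith
end

section
/- Fix $0<\theta\leq 1$. Let $L_j=2^j$, $m_j=\lceil\theta L_j\rceil$, and let $(\mathcal{A}_j)$ be pairwise disjoint dyadic alphabets with $\#\mathcal{A}_j=N_j\geq m_j$. Let $\mathcal{B}_j\subset\mathcal{A}_j^{L_j}$ be the words whose prefix distinctness equals $\lceil\theta t\rceil$ at every time $1\leq t\leq L_j$. If $x\in[0,1)$ has digit sequence formed by concatenating blocks $b_j\in\mathcal{B}_j$ (in order), then for every $n$ with $S_{J-1}<n\leq S_J$ (where $S_J=\sum_{j\leq J}L_j$) one has $\theta n \leq D_n(x) < \theta n + J$, where $D_n(x)=\#\{d_1(x),\ldots,d_n(x)\}$. Consequently $\lim_{n\to\infty}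 D_n(x)/n=\theta$. -/
/-!
Blocks over pairwise disjoint alphabets contribute disjoint sets of digits, so the number of
distinct digits among the first `n = S (J-1) + t` digits is `∑_{j<J} ⌈θ 2^j⌉ + ⌈θ t⌉`.
Each ceiling exceeds its argument by less than one, whence `θ n ≤ D_n < θ n + J`.
Since `2^J ≤ n + 1`, the error `J` is `O(log n)`, and `D_n / n → θ`.
-/

open Finset Filter Topology

def prefixDigits (d : ℕ → ℕ) (n : ℕ) : Finset ℕ := (Icc 1 n).image d

theorem prefixDigits_zero (d : ℕ → ℕ) : prefixDigits d 0 = ∅ := by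
  simp [prefixDigits]

theorem prefixDigits_add (d : ℕ → ℕ) (m t : ℕ) :
    prefixDigits d (m + t) = prefixDigits d m ∪ prefixDigits (fun i => d (m + i)) t := by
  have hIcc : Icc 1 (m + t) = Icc 1 m ∪ (Icc 1 t).image (m + ·) := by
    rw [image_add_left_Icc]
    ext
    simp only [mem_Icc, mem_union]
    omega
  rw [prefixDigits, hIcc, image_union, image_image]
  rfl

theorem sum_ceil_le_sum_add_card {ι : Type*} (s : Finset ι) {f : ι → ℝ}
    (hf : ∀ i ∈ s, 0 ≤ f i) : ∑ i ∈ s, (⌈f i⌉₊ : ℝ) ≤ ∑ i ∈ s, f i + #s :=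
  calc ∑ i ∈ s, (⌈f i⌉₊ : ℝ) ≤ ∑ i ∈ s, (f i + 1) :=
        sum_le_sum fun i hi => (Nat.ceil_lt_add_one (hf i hi)).le
    _ = ∑ i ∈ s, f i + #s := by simp [sum_add_distrib]

theorem sum_Icc_one_two_pow_add_two (K : ℕ) : ∑ j ∈ Icc 1 K, 2 ^ j + 2 = 2 ^ (K + 1) := by
  induction K with
  | zero => simp
  | succ K ih =>
    rw [sum_Icc_succ_top (by omega), pow_succ 2 (K + 1)]
    omega

theorem exists_lt_and_le_succ {S : ℕ → ℕ} (h0 : S 0 = 0) {n : ℕ} (hn : 0 < n)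
    (hbdd : ∃ J, n ≤ S J) : ∃ K, S K < n ∧ n ≤ S (K + 1) := by
  classical
  have hpos : Nat.find hbdd ≠ 0 := fun h => by
    have := Nat.find_spec hbdd
    rw [h, h0] at this
    omega
  refine ⟨Nat.find hbdd - 1, ?_, ?_⟩
  · exact not_le.1 (Nat.find_min hbdd (by omega))
  · rw [Nat.sub_add_cancel (Nat.one_le_iff_ne_zero.2 hpos)]
    exact Nat.find_spec hbdd

theorem tendsto_div_of_le_of_le_add_log {a : ℕ → ℝ} {θ c : ℝ}
    (h : ∀ᶠ n : ℕ in atTop, θ * n ≤ a n ∧ a n ≤ θ * n + c * Real.log (n + 1)) :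
    Tendsto (fun n => a n / n) atTop (𝓝 θ) := by
  have hlog : Tendsto (fun n : ℕ => Real.log (n + 1) / n) atTop (𝓝 0) := by
    have := (Real.tendsto_pow_log_div_mul_add_atTop 1 (-1) 1 one_ne_zero).comp
      (tendsto_atTop_add_const_right atTop 1 tendsto_natCast_atTop_atTop)
    refine this.congr fun n => ?_
    simp
  have hupper : Tendsto (fun n : ℕ => θ + c * (Real.log (n + 1) / n)) atTop (𝓝 θ) := by
    simpa using (hlog.const_mul c).const_add θ
  refine tendsto_of_tendsto_of_tendsto_of_le_of_le' tendsto_const_nhds hupper ?_ ?_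
  · filter_upwards [h, eventually_gt_atTop 0] with n hn hpos
    rw [le_div_iff₀ (Nat.cast_pos.2 hpos)]
    exact hn.1
  · filter_upwards [h, eventually_gt_atTop 0] with n hn hpos
    rw [div_le_iff₀ (Nat.cast_pos.2 hpos), add_mul, mul_assoc,
      div_mul_cancel₀ _ (Nat.cast_ne_zero.2 hpos.ne')]
    exact hn.2

section Blocks

variable {A : ℕ → Finset ℕ} {d L S : ℕ → ℕ}

theorem partialSum_succ (hS : ∀ J, S J = ∑ j ∈ Icc 1 J, L j) (K : ℕ) :
    S (K + 1) = S K + L (K + 1) := by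
  rw [hS, hS, sum_Icc_succ_top (by omega)]

theorem prefixDigits_block_subset
    (hmem : ∀ j, 1 ≤ j → ∀ t, 1 ≤ t → t ≤ L j → d (S (j - 1) + t) ∈ A j)
    {j t : ℕ} (hj : 1 ≤ j) (ht : t ≤ L j) :
    prefixDigits (fun i => d (S (j - 1) + i)) t ⊆ A j := by
  intro a ha
  obtain ⟨i, hi, rfl⟩ := mem_image.1 ha
  rw [mem_Icc] at hi
  exact hmem j hj i hi.1 (hi.2.trans ht)

theorem disjoint_prefixDigits_partialSum (hdisj : Pairwise (Function.onFun Disjoint A))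
    (hS : ∀ J, S J = ∑ j ∈ Icc 1 J, L j)
    (hmem : ∀ j, 1 ≤ j → ∀ t, 1 ≤ t → t ≤ L j → d (S (j - 1) + t) ∈ A j) :
    ∀ {K j : ℕ}, K < j → Disjoint (prefixDigits d (S K)) (A j)
  | 0, j, _ => by simp [hS 0, prefixDigits_zero]
  | K + 1, j, hKj => by
    rw [partialSum_succ hS, prefixDigits_add, disjoint_union_left]
    refine ⟨disjoint_prefixDigits_partialSum hdisj hS hmem (by omega), ?_⟩
    exact (hdisj (show K + 1 ≠ j by omega)).mono_left
      (prefixDigits_block_subset (j := K + 1) hmem (by omega) le_rfl)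

theorem card_prefixDigits_partialSum_add (hdisj : Pairwise (Function.onFun Disjoint A))
    (hS : ∀ J, S J = ∑ j ∈ Icc 1 J, L j)
    (hmem : ∀ j, 1 ≤ j → ∀ t, 1 ≤ t → t ≤ L j → d (S (j - 1) + t) ∈ A j)
    {K t : ℕ} (ht : t ≤ L (K + 1)) :
    #(prefixDigits d (S K + t))
      = #(prefixDigits d (S K)) + #(prefixDigits (fun i => d (S K + i)) t) := by
  rw [prefixDigits_add, card_union_of_disjoint]
  exact (disjoint_prefixDigits_partialSum hdisj hS hmem (Nat.lt_succ_self K)).mono_right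
    (prefixDigits_block_subset (j := K + 1) hmem (by omega) ht)

theorem card_prefixDigits_partialSum (hdisj : Pairwise (Function.onFun Disjoint A))
    (hS : ∀ J, S J = ∑ j ∈ Icc 1 J, L j)
    (hmem : ∀ j, 1 ≤ j → ∀ t, 1 ≤ t → t ≤ L j → d (S (j - 1) + t) ∈ A j) (K : ℕ) :
    #(prefixDigits d (S K)) =
      ∑ j ∈ Icc 1 K, #(prefixDigits (fun i => d (S (j - 1) + i)) (L j)) := by
  induction K with
  | zero => simp [hS 0, prefixDigits_zero]
  | succ K ih =>
    rw [partialSum_succ hS, card_prefixDigits_partialSum_add hdisj hS hmem le_rfl, ih,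
      sum_Icc_succ_top (by omega), Nat.add_sub_cancel]

variable {θ : ℝ}

theorem card_prefixDigits_eq_sum_ceil (hdisj : Pairwise (Function.onFun Disjoint A))
    (hS : ∀ J, S J = ∑ j ∈ Icc 1 J, L j)
    (hmem : ∀ j, 1 ≤ j → ∀ t, 1 ≤ t → t ≤ L j → d (S (j - 1) + t) ∈ A j)
    (hprofile : ∀ j, 1 ≤ j → ∀ t, 1 ≤ t → t ≤ L j →
      #(prefixDigits (fun i => d (S (j - 1) + i)) t) = ⌈θ * t⌉₊)
    {K t : ℕ} (ht : t ≤ L (K + 1)) :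
    #(prefixDigits d (S K + t)) = ∑ j ∈ Icc 1 K, ⌈θ * L j⌉₊ + ⌈θ * t⌉₊ := by
  have hblock : ∀ j, 1 ≤ j → ∀ t, t ≤ L j →
      #(prefixDigits (fun i => d (S (j - 1) + i)) t) = ⌈θ * t⌉₊ := by
    intro j hj t ht
    rcases Nat.eq_zero_or_pos t with rfl | ht0
    · simp [prefixDigits_zero]
    · exact hprofile j hj t ht0 ht
  rw [card_prefixDigits_partialSum_add hdisj hS hmem ht,
    card_prefixDigits_partialSum hdisj hS hmem,
    sum_congr rfl fun j hj => hblock j (mem_Icc.1 hj).1 (L j) le_rfl]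
  simpa using hblock (K + 1) (by omega) t ht

theorem card_prefixDigits_bounds (hθ : 0 ≤ θ) (hdisj : Pairwise (Function.onFun Disjoint A))
    (hS : ∀ J, S J = ∑ j ∈ Icc 1 J, L j)
    (hmem : ∀ j, 1 ≤ j → ∀ t, 1 ≤ t → t ≤ L j → d (S (j - 1) + t) ∈ A j)
    (hprofile : ∀ j, 1 ≤ j → ∀ t, 1 ≤ t → t ≤ L j →
      #(prefixDigits (fun i => d (S (j - 1) + i)) t) = ⌈θ * t⌉₊)
    {K n : ℕ} (hlt : S K < n) (hle : n ≤ S (K + 1)) :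
    θ * n ≤ #(prefixDigits d n) ∧ (#(prefixDigits d n) : ℝ) < θ * n + (K + 1) := by
  obtain ⟨t, rfl⟩ : ∃ t, n = S K + t := ⟨n - S K, by omega⟩
  have ht : t ≤ L (K + 1) := by
    have := partialSum_succ hS K
    omega
  have hSK : (S K : ℝ) = ∑ j ∈ Icc 1 K, (L j : ℝ) := by
    rw [hS]
    push_cast
    rfl
  have hsum_lower : θ * S K ≤ ∑ j ∈ Icc 1 K, (⌈θ * L j⌉₊ : ℝ) := by
    rw [hSK, mul_sum]
    exact sum_le_sum fun j _ => Nat.le_ceil _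
  have hsum_upper : ∑ j ∈ Icc 1 K, (⌈θ * L j⌉₊ : ℝ) ≤ θ * S K + K := by
    have := sum_ceil_le_sum_add_card (Icc 1 K) (f := fun j => θ * L j) fun j _ => by positivity
    rwa [← mul_sum, ← hSK, Nat.card_Icc, Nat.add_sub_cancel] at this
  have hlast_upper : (⌈θ * t⌉₊ : ℝ) < θ * t + 1 := Nat.ceil_lt_add_one (by positivity)
  rw [card_prefixDigits_eq_sum_ceil hdisj hS hmem hprofile ht]
  push_cast
  constructor
  · nlinarith [Nat.le_ceil (θ * t)]
  · linarith

end Blocks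

theorem stmt13_general (θ : ℝ) (hθ0 : 0 < θ)
    (A : ℕ → Finset ℕ)
    (hdisj : Pairwise (Function.onFun Disjoint A))
    (d : ℕ → ℕ)
    (S : ℕ → ℕ) (hS : ∀ J, S J = ∑ j ∈ Finset.Icc 1 J, 2 ^ j)
    (hblock : ∀ j : ℕ, 1 ≤ j → ∀ t : ℕ, 1 ≤ t → t ≤ 2 ^ j →
      d (S (j - 1) + t) ∈ A j ∧
      ((Finset.Icc 1 t).image (fun i => d (S (j - 1) + i))).card = ⌈θ * (t : ℝ)⌉₊) :
    (∀ J n : ℕ, 1 ≤ J → S (J - 1) < n → n ≤ S J →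
      θ * n ≤ (((Finset.Icc 1 n).image d).card : ℝ) ∧
      (((Finset.Icc 1 n).image d).card : ℝ) < θ * n + J) ∧
    Filter.Tendsto (fun n : ℕ => (((Finset.Icc 1 n).image d).card : ℝ) / n)
      Filter.atTop (nhds θ) := by
  have hbounds {K n : ℕ} (hlt : S K < n) (hle : n ≤ S (K + 1)) :=
    card_prefixDigits_bounds (L := (2 ^ ·)) hθ0.le hdisj hS
      (fun j hj t h1 h2 => (hblock j hj t h1 h2).1) (fun j hj t h1 h2 => (hblock j hj t h1 h2).2)
      hlt hle
  have hS2 (K : ℕ) : S K + 2 = 2 ^ (K + 1) := by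
    rw [hS]
    exact sum_Icc_one_two_pow_add_two K
  refine ⟨fun J n hJ hlt hle => ?_, ?_⟩
  · obtain ⟨K, rfl⟩ : ∃ K, J = K + 1 := ⟨J - 1, by omega⟩
    simpa [prefixDigits] using hbounds (K := K) (by simpa using hlt) hle
  · refine tendsto_div_of_le_of_le_add_log (a := fun n => #(prefixDigits d n))
      (c := 1 / Real.log 2) ?_
    filter_upwards [eventually_gt_atTop 0] with n hn
    have hunbdd : n ≤ S n := by
      have h := hS2 n
      rw [pow_succ] at h
      have := Nat.lt_two_pow_self (n := n)
      omega
    obtain ⟨K, hlt, hle⟩ := exists_lt_and_le_succ (by simp [hS 0]) hn ⟨n, hunbdd⟩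
    have hK : (K : ℝ) + 1 ≤ 1 / Real.log 2 * Real.log (n + 1) := by
      rw [one_div_mul_eq_div, le_div_iff₀ (Real.log_pos one_lt_two), ← Nat.cast_succ,
        ← Real.log_pow]
      have hpow : 2 ^ (K + 1) ≤ n + 1 := hS2 K ▸ (by omega)
      exact Real.log_le_log (by positivity) (by exact_mod_cast hpow)
    obtain ⟨hlower, hupper⟩ := hbounds hlt hle
    exact ⟨hlower, by linarith⟩

/-- Block concatenation construction: if the digit sequence `d` is a concatenation of
admissible blocks over pairwise disjoint alphabets, with block `j` of length `2^j` and
prefix distinctness profile `⌈θt⌉`, then for `S(J-1) < n ≤ S(J)` the distinct-digit count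
`D_n` satisfies `θn ≤ D_n < θn + J`, and `D_n/n → θ`. -/
theorem stmt13 (θ : ℝ) (hθ0 : 0 < θ) (hθ1 : θ ≤ 1)
    (A : ℕ → Finset ℕ)
    (hA : ∀ j : ℕ, 1 ≤ j → ⌈θ * ((2 : ℝ) ^ j)⌉₊ ≤ (A j).card)
    (hdisj : Pairwise (Function.onFun Disjoint A))
    (d : ℕ → ℕ)
    (S : ℕ → ℕ) (hS : ∀ J, S J = ∑ j ∈ Finset.Icc 1 J, 2 ^ j)
    (hblock : ∀ j : ℕ, 1 ≤ j → ∀ t : ℕ, 1 ≤ t → t ≤ 2 ^ j →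
      d (S (j - 1) + t) ∈ A j ∧
      ((Finset.Icc 1 t).image (fun i => d (S (j - 1) + i))).card = ⌈θ * (t : ℝ)⌉₊) :
    (∀ J n : ℕ, 1 ≤ J → S (J - 1) < n → n ≤ S J →
      θ * n ≤ (((Finset.Icc 1 n).image d).card : ℝ) ∧
      (((Finset.Icc 1 n).image d).card : ℝ) < θ * n + J) ∧
    Filter.Tendsto (fun n : ℕ => (((Finset.Icc 1 n).image d).card : ℝ) / n)
      Filter.atTop (nhds θ) :=
  stmt13_general θ hθ0 A hdisj d S hS hblock
end
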